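/- arXiv:2212.07762 — 2 statements merged into one kernel-verified Lean document; each statement's English description precedes it below -/
import Mathlib

section
/- Let ĝ = (g₁,g₂,g₃) : V → (0,1)³ be a C² function on a neighbourhood V of [−1,1]×𝕋^{d−1} satisfying, for some 0 < c* < C* < 1, c* ≤ g_i ≤ C* for each i and g₁+g₂+g₃ < 1, and set α̂_N(x) = ĝ(x/N) for x ∈ B_N. Then there exists a constant C₁ > 0, depending only on d, D and ĝ, such that for every N ≥ 1 and every density f with respect to ν^N_{α̂_N}: Σ_{(ξ,ω)} (𝓛_N √f)(ξ,ω) · √f(ξ,ω) · ν^N_{α̂_N}(ξ,ω) ≤ −(1/4) 𝒟_N(f, ν^N_{α̂_N}) + C₁ N^{d−2}. -/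
open Finset

noncomputable section

namespace SIT

/-- Sites of the box `B_N = {−N,…,N} × (ℤ/Nℤ)^{d−1}`: the first coordinate
`v : Fin (2N+1)` represents the integer `v − N`; the `d−1` transverse
coordinates are periodic of period `N`. -/
abbrev Site (d N : ℕ) : Type := Fin (2 * N + 1) × (Fin (d - 1) → Fin N)

/-- Configurations `(ξ, ω)` of the process: at each site, the pair
`(ξ(x), ω(x)) ∈ {0,1} × {0,1}`. -/
abbrev Config (d N : ℕ) : Type := Site d N → Bool × Bool

variable {d N : ℕ}

/-- The state in `{0,1,2,3}` of a pair `(ξ(x), ω(x))`: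
`(0,0) ↦ 0`, `(1,0) ↦ 1`, `(0,1) ↦ 2`, `(1,1) ↦ 3`. -/
def state : Bool × Bool → Fin 4
  | (false, false) => 0
  | (true, false) => 1
  | (false, true) => 2
  | (true, true) => 3

/-- The pair `(ξ(x), ω(x))` corresponding to a state `i ∈ {0,1,2,3}`. -/
def pairOfState (i : Fin 4) : Bool × Bool :=
  if i = 0 then (false, false) else if i = 1 then (true, false)
    else if i = 2 then (false, true) else (true, true)

/-- `η_i(x)`, as a real-valued indicator. -/
def eta (i : Fin 4) (η : Config d N) (x : Site d N) : ℝ :=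
  if state (η x) = i then 1 else 0

/-- Cyclic successor in `Fin N`. -/
def cyc {N : ℕ} (v : Fin N) : Fin N :=
  ⟨(v.val + 1) % N, Nat.mod_lt _ (Nat.lt_of_le_of_lt (Nat.zero_le _) v.isLt)⟩

/-- `x + e_k`, when it lies in the box `B_N` (the first direction is
non-periodic, the transverse ones are periodic). -/
def step (k : Fin d) (x : Site d N) : Option (Site d N) :=
  if k.val = 0 then
    if h : x.1.val + 1 < 2 * N + 1 then some (⟨x.1.val + 1, h⟩, x.2) else none
  else
    some (x.1, fun j => if j.val = k.val - 1 then cyc (x.2 j) else x.2 j)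

/-- The configuration `(ξ^{x,y}, ω^{x,y})` with the values at `x` and `y` exchanged. -/
def swap (x y : Site d N) (η : Config d N) : Config d N :=
  fun z => if z = x then η y else if z = y then η x else η z

/-- Flip the `ξ`-value at `x` (i.e. `(σ^x ξ, ω)`). -/
def flipXi (x : Site d N) (η : Config d N) : Config d N :=
  Function.update η x (!(η x).1, (η x).2)

/-- Flip the `ω`-value at `x` (i.e. `(ξ, σ^x ω)`). -/
def flipOmega (x : Site d N) (η : Config d N) : Config d N :=
  Function.update η x ((η x).1, !(η x).2)

/-- `σ_{i,x}(ξ,ω)`: the configuration agreeing with `(ξ,ω)` off `x` and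
whose state at `x` is `i`. -/
def setState (i : Fin 4) (x : Site d N) (η : Config d N) : Config d N :=
  Function.update η x (pairOfState i)

/-- A boolean as a real number. -/
def b2r (b : Bool) : ℝ := if b then 1 else 0

/-- The nearest-neighbour relation on `B_N`. -/
def nbr (x y : Site d N) : Prop :=
  ∃ k : Fin d, step k x = some y ∨ step k y = some x

instance (x y : Site d N) : Decidable (nbr x y) :=
  inferInstanceAs (Decidable (∃ k : Fin d, step k x = some y ∨ step k y = some x))

/-- `n_i(x,η)`: the number of nearest neighbours of `x` in state `i`. -/
def nCount (i : Fin 4) (x : Site d N) (η : Config d N) : ℝ :=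
  ∑ y : Site d N, if nbr x y then eta i η y else 0

/-- The birth rate `β(x,ξ,ω) = λ₁ n₁(x) + λ₂ n₃(x)`. -/
def beta (lam1 lam2 : ℝ) (x : Site d N) (η : Config d N) : ℝ :=
  lam1 * nCount 1 x η + lam2 * nCount 3 x η

/-- The exchange (stirring) generator `𝓛_N` with diffusivity `D`. -/
def exchGen (D : ℝ) (f : Config d N → ℝ) (η : Config d N) : ℝ :=
  D * ∑ k : Fin d, ∑ x : Site d N,
    (step k x).elim 0 fun y => f (swap x y η) - f η

/-- The generalized contact process generator `𝕃_N`. -/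
def contactGen (lam1 lam2 r : ℝ) (f : Config d N → ℝ) (η : Config d N) : ℝ :=
  ∑ x : Site d N,
    ((r * (1 - b2r (η x).2) + b2r (η x).2) * (f (flipOmega x η) - f η)
      + (beta lam1 lam2 x η * (1 - b2r (η x).1) + b2r (η x).1) * (f (flipXi x η) - f η))

/-- The left boundary `Γ_N^-` (first coordinate `−N`). -/
def leftB (d N : ℕ) : Finset (Site d N) := univ.filter fun x => x.1.val = 0

/-- The right boundary `Γ_N^+` (first coordinate `N`). -/
def rightB (d N : ℕ) : Finset (Site d N) := univ.filter fun x => x.1.val = 2 * N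

/-- The quadruple of rates `(b₀,b₁,b₂,b₃)` built from `(b₁,b₂,b₃)`,
with `b₀ = 1 − b₁ − b₂ − b₃`. -/
def rate4 (b1 b2 b3 : Site d N → ℝ) : Fin 4 → Site d N → ℝ :=
  fun i => if i = 1 then b1 else if i = 2 then b2 else if i = 3 then b3
    else fun x => 1 - b1 x - b2 x - b3 x

/-- The boundary generator `L_{b̂,θ̂,N}`. -/
def bdryGen (b1 b2 b3 : Site d N → ℝ) (θl θr : ℝ) (f : Config d N → ℝ)
    (η : Config d N) : ℝ :=
  (N : ℝ) ^ (-θl) * ∑ i : Fin 4, ∑ x ∈ leftB d N,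
      rate4 b1 b2 b3 i x * (f (setState i x η) - f η)
  + (N : ℝ) ^ (-θr) * ∑ i : Fin 4, ∑ x ∈ rightB d N,
      rate4 b1 b2 b3 i x * (f (setState i x η) - f η)

/-- The full generator `L_N = N²𝓛_N + N²L_{b̂,θ̂,N} + 𝕃_N`. -/
def fullGen (D lam1 lam2 r : ℝ) (b1 b2 b3 : Site d N → ℝ) (θl θr : ℝ)
    (f : Config d N → ℝ) (η : Config d N) : ℝ :=
  (N : ℝ) ^ (2 : ℕ) * exchGen D f η + (N : ℝ) ^ (2 : ℕ) * bdryGen b1 b2 b3 θl θr f η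
    + contactGen lam1 lam2 r f η

/-- The weight `ν^N_α̂(ξ,ω) = ∏_x α_{state(x)}(x)` of the product measure. -/
def nu (a1 a2 a3 : Site d N → ℝ) (η : Config d N) : ℝ :=
  ∏ x : Site d N, rate4 a1 a2 a3 (state (η x)) x

/-- The macroscopic point `x/N ∈ [−1,1] × 𝕋^{d−1}`, lifted to `ℝ × ℝ^{d−1}`. -/
def pt (x : Site d N) : ℝ × (Fin (d - 1) → ℝ) :=
  (((x.1.val : ℝ) - N) / N, fun j => ((x.2 j).val : ℝ) / N)

/-- The exchange Dirichlet form `𝒟_N(f,ν^N_α̂)`. -/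
def exchDirForm (D : ℝ) (a1 a2 a3 : Site d N → ℝ) (f : Config d N → ℝ) : ℝ :=
  D * ∑ k : Fin d, ∑ x : Site d N,
    (step k x).elim 0 fun y => ∑ η : Config d N,
      (Real.sqrt (f (swap x y η)) - Real.sqrt (f η)) ^ 2 * nu a1 a2 a3 η

/-- The boundary Dirichlet form `D_{b̂,θ̂,N}(f,ν^N_α̂)`. -/
def bdryDirForm (b1 b2 b3 : Site d N → ℝ) (θl θr : ℝ) (a1 a2 a3 : Site d N → ℝ)
    (f : Config d N → ℝ) : ℝ :=
  (N : ℝ) ^ (-θl) * ∑ i : Fin 4, ∑ x ∈ leftB d N, ∑ η : Config d N,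
      rate4 b1 b2 b3 i x * (1 - eta i η x)
        * (Real.sqrt (f (setState i x η)) - Real.sqrt (f η)) ^ 2 * nu a1 a2 a3 η
  + (N : ℝ) ^ (-θr) * ∑ i : Fin 4, ∑ x ∈ rightB d N, ∑ η : Config d N,
      rate4 b1 b2 b3 i x * (1 - eta i η x)
        * (Real.sqrt (f (setState i x η)) - Real.sqrt (f η)) ^ 2 * nu a1 a2 a3 η

/-!
The bonds contribute separately. For a bond `{x, y}` the exchange `σ = swap x y` is an
involution, so polarization and a change of variables give
`⟨(√f ∘ σ - √f) √f⟩_ν = -½ 𝒟_{xy} + ¼ ∑ (f - f ∘ σ) (ν ∘ σ - ν)`.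
Under `σ` the product weight changes only through the rates at `x` and `y`, which for a
Lipschitz profile bounded away from `0` differ by `O(1/N)`; hence `|ν ∘ σ - ν| ≤ (C/N) ν`, and
Young's inequality bounds the last sum by `𝒟_{xy} + O(N⁻²)`. Summing the resulting
`-¼ 𝒟_{xy} + O(N⁻²)` over the `O(N^d)` bonds gives the claim.
-/

section Swap

lemma swap_self (x : Site d N) (η : Config d N) : swap x x η = η := by
  funext z; unfold swap; split_ifs <;> simp_all

lemma swap_apply_of_ne_of_ne {x y z : Site d N} (hzx : z ≠ x) (hzy : z ≠ y) (η : Config d N) :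
    swap x y η z = η z := by
  simp [swap, hzx, hzy]

lemma swap_involutive (x y : Site d N) : Function.Involutive (swap x y) := by
  intro η; funext z; unfold swap; split_ifs <;> simp_all

end Swap

section Involution

variable {S : Type*} [Fintype S] {σ : S → S}

lemma sum_comp_sub_mul_eq_half_sum (hσ : Function.Involutive σ) (F ν : S → ℝ) :
    ∑ s, (F (σ s) - F s) * ν s = (1 / 2) * ∑ s, (F s - F (σ s)) * (ν (σ s) - ν s) := by
  have h1 := (hσ.toPerm σ).sum_comp Finset.univ (fun s => F s * ν (σ s)) (by simp)
  have h2 := (hσ.toPerm σ).sum_comp Finset.univ (fun s => F s * ν s) (by simp)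
  simp only [Function.Involutive.coe_toPerm, hσ _] at h1 h2
  simp only [sub_mul, mul_sub, Finset.sum_sub_distrib] at *
  linarith

lemma sum_comp_mul_le (hσ : Function.Involutive σ) {f ν : S → ℝ} (hf : ∀ s, 0 ≤ f s)
    {c : ℝ} (hν : ∀ s, |ν (σ s) - ν s| ≤ c * ν s) :
    ∑ s, f (σ s) * ν s ≤ (1 + c) * ∑ s, f s * ν s := by
  have h := (hσ.toPerm σ).sum_comp Finset.univ (fun s => f s * ν (σ s)) (by simp)
  simp only [Function.Involutive.coe_toPerm, hσ _] at h
  rw [h, Finset.mul_sum]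
  refine Finset.sum_le_sum fun s _ => ?_
  nlinarith [hf s, (abs_le.1 (hν s)).2]

lemma sq_sub_sq_mul_sub_le {a b w w' c : ℝ} (ha : 0 ≤ a) (hb : 0 ≤ b) (hw : 0 ≤ w)
    (h : |w' - w| ≤ c * w) :
    (a ^ 2 - b ^ 2) * (w' - w) ≤ ((b - a) ^ 2 + c ^ 2 * (a ^ 2 + b ^ 2) / 2) * w := by
  have habs : (a ^ 2 - b ^ 2) * (w' - w) ≤ |a - b| * (a + b) * (c * w) := by
    rw [show a ^ 2 - b ^ 2 = (a - b) * (a + b) by ring]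
    calc _ ≤ |(a - b) * (a + b) * (w' - w)| := le_abs_self _
      _ = |a - b| * (a + b) * |w' - w| := by
          rw [abs_mul, abs_mul, abs_of_nonneg (add_nonneg ha hb)]
      _ ≤ _ := by gcongr
  -- Young: `|a - b| (a + b) c ≤ (a - b)² + c² (a + b)² / 4`, and `(a + b)² ≤ 2 (a² + b²)`.
  nlinarith [mul_nonneg hw (sq_nonneg (|a - b| - c * (a + b) / 2)), sq_abs (a - b),
    mul_nonneg hw (sq_nonneg (c * (a - b)))]

lemma sum_sqrt_comp_sub_mul_le (hσ : Function.Involutive σ) {ν : S → ℝ} (hν : ∀ s, 0 ≤ ν s)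
    {c : ℝ} (hνσ : ∀ s, |ν (σ s) - ν s| ≤ c * ν s) {f : S → ℝ}
    (hf : ∀ s, 0 ≤ f s) (hf1 : ∑ s, f s * ν s = 1) :
    ∑ s, (√(f (σ s)) - √(f s)) * √(f s) * ν s
      ≤ -(1 / 4) * ∑ s, (√(f (σ s)) - √(f s)) ^ 2 * ν s + c ^ 2 * (2 + c) / 8 := by
  set E := ∑ s, (√(f (σ s)) - √(f s)) ^ 2 * ν s
  have hsq : ∀ s, √(f s) ^ 2 = f s := fun s => Real.sq_sqrt (hf s)
  have polarize : ∑ s, (√(f (σ s)) - √(f s)) * √(f s) * ν s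
      = -(1 / 2) * E + (1 / 2) * ∑ s, (f (σ s) - f s) * ν s := by
    simp only [E, Finset.mul_sum, ← Finset.sum_add_distrib]
    refine Finset.sum_congr rfl fun s _ => ?_
    linear_combination (ν s / 2) * hsq (σ s) - (ν s / 2) * hsq s
  have pointwise : ∑ s, (f s - f (σ s)) * (ν (σ s) - ν s)
      ≤ E + c ^ 2 / 2 * ∑ s, (f s + f (σ s)) * ν s := by
    simp only [E, Finset.mul_sum, ← Finset.sum_add_distrib]
    gcongr with s
    have := sq_sub_sq_mul_sub_le (Real.sqrt_nonneg (f s)) (Real.sqrt_nonneg (f (σ s)))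
      (hν s) (hνσ s)
    rw [hsq, hsq] at this
    linarith
  have mass : ∑ s, (f s + f (σ s)) * ν s ≤ 2 + c := by
    have := sum_comp_mul_le hσ hf hνσ
    simp only [add_mul, Finset.sum_add_distrib, hf1] at this ⊢
    linarith
  rw [polarize, sum_comp_sub_mul_eq_half_sum hσ]
  nlinarith [mul_le_mul_of_nonneg_left mass (by positivity : 0 ≤ c ^ 2 / 2)]

end Involution

section ProductWeight

lemma abs_prod_sub_prod_le_of_eqOn_compl {S : Type*} [Fintype S] [DecidableEq S]
    {F G : S → ℝ} {m ε : ℝ} (hm : 0 < m) (hF : ∀ z, F z ∈ Set.Icc m 1) (hG : ∀ z, |G z| ≤ 1)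
    {x y : S} (hxy : x ≠ y) (hoff : ∀ z, z ≠ x → z ≠ y → G z = F z)
    (hx : |G x - F y| ≤ ε) (hy : |G y - F x| ≤ ε) :
    |∏ z, G z - ∏ z, F z| ≤ 2 * ε / m ^ 2 * ∏ z, F z := by
  have split : ∀ H : S → ℝ, ∏ z, H z = H x * H y * ∏ z ∈ {x, y}ᶜ, H z := fun H => by
    rw [← Finset.prod_mul_prod_compl {x, y}, Finset.prod_pair hxy]
  have hrest : ∏ z ∈ {x, y}ᶜ, G z = ∏ z ∈ {x, y}ᶜ, F z :=
    Finset.prod_congr rfl fun z hz => by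
      simp only [Finset.mem_compl, Finset.mem_insert, Finset.mem_singleton, not_or] at hz
      exact hoff z hz.1 hz.2
  set P := ∏ z ∈ {x, y}ᶜ, F z
  have hP : 0 < P := Finset.prod_pos fun z _ => hm.trans_le (hF z).1
  have hpair : |G x * G y - F x * F y| ≤ 2 * ε := by
    have hFx : |F x| ≤ 1 := abs_le.2 ⟨by linarith [(hF x).1], (hF x).2⟩
    calc |G x * G y - F x * F y| = |G x * (G y - F x) + F x * (G x - F y)| := by ring_nf
      _ ≤ |G x| * |G y - F x| + |F x| * |G x - F y| := by
          rw [← abs_mul, ← abs_mul]; exact abs_add_le _ _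
      _ ≤ 1 * ε + 1 * ε := by gcongr; exact hG x
      _ = 2 * ε := by ring
  have hm2 : m ^ 2 ≤ F x * F y := by
    rw [sq]; exact mul_le_mul (hF x).1 (hF y).1 hm.le (hm.le.trans (hF x).1)
  rw [split G, split F, hrest, ← sub_mul, abs_mul, abs_of_pos hP]
  calc |G x * G y - F x * F y| * P ≤ 2 * ε * P := by gcongr
    _ = 2 * ε / m ^ 2 * (m ^ 2 * P) := by field_simp
    _ ≤ 2 * ε / m ^ 2 * (F x * F y * P) := by
        have : 0 ≤ ε := (abs_nonneg _).trans hx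
        gcongr

end ProductWeight

section Rates

variable {a1 a2 a3 : Site d N → ℝ}

lemma sum_rate4 (x : Site d N) : ∑ i, rate4 a1 a2 a3 i x = 1 := by
  simp only [rate4, Fin.sum_univ_four, Fin.isValue, zero_ne_one, ↓reduceIte, Fin.reduceEq]
  ring

lemma rate4_le_one {x : Site d N} (hpos : ∀ i, 0 ≤ rate4 a1 a2 a3 i x) (i : Fin 4) :
    rate4 a1 a2 a3 i x ≤ 1 :=
  sum_rate4 (a1 := a1) (a2 := a2) (a3 := a3) x ▸
    Finset.single_le_sum (fun j _ => hpos j) (Finset.mem_univ i)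

lemma le_rate4_of_le_min {m : ℝ} {x : Site d N}
    (h : m ≤ min (min (a1 x) (a2 x)) (min (a3 x) (1 - a1 x - a2 x - a3 x))) (i : Fin 4) :
    m ≤ rate4 a1 a2 a3 i x := by
  simp only [le_min_iff] at h
  fin_cases i <;> simp [rate4, h]

lemma abs_rate4_sub_le {x y : Site d N} {ε : ℝ} (h1 : |a1 x - a1 y| ≤ ε)
    (h2 : |a2 x - a2 y| ≤ ε) (h3 : |a3 x - a3 y| ≤ ε) (i : Fin 4) :
    |rate4 a1 a2 a3 i x - rate4 a1 a2 a3 i y| ≤ 3 * ε := by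
  have hε : 0 ≤ ε := (abs_nonneg _).trans h1
  rw [abs_le] at *
  fin_cases i <;>
    simp only [rate4, Fin.zero_eta, Fin.mk_one, Fin.reduceFinMk, Fin.isValue, Fin.reduceEq,
      zero_ne_one, ↓reduceIte] <;>
    constructor <;> linarith

lemma nu_pos {m : ℝ} (hm : 0 < m) (hlow : ∀ i z, m ≤ rate4 a1 a2 a3 i z) (η : Config d N) :
    0 < nu a1 a2 a3 η :=
  Finset.prod_pos fun z _ => hm.trans_le (hlow _ z)

lemma abs_nu_swap_sub_le {m ε : ℝ} (hm : 0 < m) (hlow : ∀ i z, m ≤ rate4 a1 a2 a3 i z)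
    {x y : Site d N} (h1 : |a1 x - a1 y| ≤ ε) (h2 : |a2 x - a2 y| ≤ ε)
    (h3 : |a3 x - a3 y| ≤ ε) (η : Config d N) :
    |nu a1 a2 a3 (swap x y η) - nu a1 a2 a3 η| ≤ 6 * ε / m ^ 2 * nu a1 a2 a3 η := by
  rcases eq_or_ne x y with rfl | hxy
  · have hε : 0 ≤ ε := (abs_nonneg _).trans h1
    rw [swap_self, sub_self, abs_zero]
    exact mul_nonneg (by positivity) (nu_pos hm hlow η).le
  have hrate : ∀ i z, rate4 a1 a2 a3 i z ∈ Set.Icc m 1 := fun i z =>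
    ⟨hlow i z, rate4_le_one (fun j => hm.le.trans (hlow j z)) i⟩
  have hclose := abs_rate4_sub_le h1 h2 h3
  have hprod := abs_prod_sub_prod_le_of_eqOn_compl hm (fun z => hrate (state (η z)) z)
    (G := fun z => rate4 a1 a2 a3 (state (swap x y η z)) z)
    (fun z => abs_le.2 ⟨by linarith [(hrate (state (swap x y η z)) z).1],
      (hrate (state (swap x y η z)) z).2⟩) hxy
    (fun z hzx hzy => by simp only [swap_apply_of_ne_of_ne hzx hzy])
    (by simpa [swap] using hclose (state (η y)))
    (by simpa [swap, hxy.symm, abs_sub_comm] using hclose (state (η x)))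
  unfold nu
  convert hprod using 2
  ring

end Rates

section Geometry

/-- A fundamental domain for `[-1,1] × 𝕋^{d-1}` in `ℝ × ℝ^{d-1}`, containing every `pt x`. -/
def box (d : ℕ) : Set (ℝ × (Fin (d - 1) → ℝ)) :=
  Set.Icc (-1 : ℝ) 1 ×ˢ Set.univ.pi fun _ => Set.Icc (0 : ℝ) 1

lemma isCompact_box : IsCompact (box d) :=
  isCompact_Icc.prod (isCompact_univ_pi fun _ => isCompact_Icc)

lemma convex_box : Convex ℝ (box d) :=
  (convex_Icc _ _).prod (convex_pi fun _ _ => convex_Icc _ _)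

lemma pt_mem_box (hN : 0 < N) (x : Site d N) : pt x ∈ box d := by
  have hN' : (0 : ℝ) < N := by exact_mod_cast hN
  have h1 : (x.1.val : ℝ) ≤ 2 * N := by exact_mod_cast Nat.lt_succ_iff.1 x.1.isLt
  refine ⟨⟨?_, ?_⟩, fun j _ => ⟨?_, ?_⟩⟩ <;> dsimp only [pt]
  · rw [le_div_iff₀ hN']; linarith [(Nat.cast_nonneg x.1.val : (0 : ℝ) ≤ _)]
  · rw [div_le_one hN']; linarith
  · positivity
  · rw [div_le_one hN']; exact_mod_cast (x.2 j).isLt.le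

lemma dist_le_of_forall_dist_le {n : ℕ} {p q : ℝ × (Fin n → ℝ)} {r : ℝ} (hr : 0 ≤ r)
    (h1 : dist p.1 q.1 ≤ r) (h2 : ∀ j, dist (p.2 j) (q.2 j) ≤ r) : dist p q ≤ r :=
  (Prod.dist_eq (x := p) (y := q)).symm ▸ max_le h1 ((dist_pi_le_iff hr).2 h2)

def TransPeriodic (G : ℝ × (Fin (d - 1) → ℝ) → ℝ) : Prop :=
  ∀ p j, G (p.1, Function.update p.2 j (p.2 j + 1)) = G p

lemma exists_near_rep_of_cyc (hN : 0 < N) (x : Site d N) (j₀ : Fin (d - 1)) :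
    ∃ q ∈ box d, dist (pt x) q ≤ 1 / N ∧ ∀ G, TransPeriodic G →
      G q = G (pt (x.1, Function.update x.2 j₀ (cyc (x.2 j₀)))) := by
  have hN' : (0 : ℝ) < N := by exact_mod_cast hN
  have hv : (x.2 j₀).val + 1 ≤ N := (x.2 j₀).isLt
  have hpt : ∀ w : Fin N, pt (x.1, Function.update x.2 j₀ w)
      = ((pt x).1, Function.update (pt x).2 j₀ (w.val / N)) := fun w => by
    refine Prod.ext rfl (funext fun j => ?_)
    by_cases hj : j = j₀
    · subst hj; simp [pt]
    · simp [pt, Function.update_of_ne hj]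
  refine ⟨((pt x).1, Function.update (pt x).2 j₀ (((x.2 j₀).val + 1 : ℕ) / N)), ?_, ?_,
    fun G hG => ?_⟩
  · refine ⟨(pt_mem_box hN x).1, fun j _ => ?_⟩
    by_cases hj : j = j₀
    · subst hj
      simp only [Function.update_self]
      exact ⟨by positivity, (div_le_one hN').2 (by exact_mod_cast hv)⟩
    · simpa [Function.update_of_ne hj] using (pt_mem_box hN x).2 j (Set.mem_univ j)
  · refine dist_le_of_forall_dist_le (by positivity) (by simp) fun j => ?_
    by_cases hj : j = j₀
    · subst hj
      have : ((x.2 j).val : ℝ) / N - ((x.2 j).val + 1 : ℕ) / N = -(1 / N) := by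
        push_cast; ring
      simp only [Function.update_self, pt, Real.dist_eq, this, abs_neg]
      exact (abs_of_pos (by positivity)).le
    · simp [Function.update_of_ne hj]
  rw [hpt]
  rcases Nat.lt_or_ge ((x.2 j₀).val + 1) N with hlt | hge
  · rw [show (cyc (x.2 j₀)).val = (x.2 j₀).val + 1 from Nat.mod_eq_of_lt hlt]
  · have hwrap : (cyc (x.2 j₀)).val = 0 := by
      show ((x.2 j₀).val + 1) % N = 0
      rw [le_antisymm hv hge, Nat.mod_self]
    rw [hwrap, Nat.cast_zero, zero_div, ← hG ((pt x).1, Function.update (pt x).2 j₀ 0) j₀]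
    simp [le_antisymm hv hge, hN'.ne']

/-- Across the periodic seam `pt y` is far from `pt x`, but a translate of it by the transverse
period is `1/N`-close. -/
lemma exists_near_rep_of_step (hN : 0 < N) {k : Fin d} {x y : Site d N}
    (hst : step k x = some y) :
    ∃ q ∈ box d, dist (pt x) q ≤ 1 / N ∧ ∀ G, TransPeriodic G → G q = G (pt y) := by
  have hN' : (0 : ℝ) < N := by exact_mod_cast hN
  unfold step at hst
  split_ifs at hst with hk hlt
  · obtain rfl := Option.some_inj.1 hst
    refine ⟨_, pt_mem_box hN _, dist_le_of_forall_dist_le (by positivity) ?_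
      (fun j => by simp [pt]), fun _ _ => rfl⟩
    have : ((x.1.val : ℝ) - N) / N - ((x.1.val + 1 : ℕ) - N) / N = -(1 / N) := by
      push_cast; ring
    simp only [pt, Real.dist_eq, this, abs_neg]
    exact (abs_of_pos (by positivity)).le
  · obtain rfl := Option.some_inj.1 hst
    have hj₀ : k.val - 1 < d - 1 := by omega
    have hy : (fun j : Fin (d - 1) => if j.val = k.val - 1 then cyc (x.2 j) else x.2 j)
        = Function.update x.2 ⟨k.val - 1, hj₀⟩ (cyc (x.2 ⟨k.val - 1, hj₀⟩)) := by
      funext j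
      by_cases hj : j.val = k.val - 1
      · rw [if_pos hj, show j = ⟨k.val - 1, hj₀⟩ from Fin.ext hj, Function.update_self]
      · rw [if_neg hj, Function.update_of_ne (fun h => hj (congrArg Fin.val h))]
    rw [hy]
    exact exists_near_rep_of_cyc hN x _

end Geometry

section Profile

variable {g : Fin 3 → ℝ × (Fin (d - 1) → ℝ) → ℝ}

lemma exists_le_rate4_of_profile (hg : ∀ i, ContinuousOn (g i) (box d))
    (hpos : ∀ i, ∀ p ∈ box d, 0 < g i p) (hsum : ∀ p ∈ box d, g 0 p + g 1 p + g 2 p < 1) :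
    ∃ m > 0, ∀ N, 0 < N → ∀ i (x : Site d N),
      m ≤ rate4 (fun x => g 0 (pt x)) (fun x => g 1 (pt x)) (fun x => g 2 (pt x)) i x := by
  obtain ⟨m, hm, hle⟩ := isCompact_box.exists_forall_le' (a := 0)
    (f := fun p => min (min (g 0 p) (g 1 p)) (min (g 2 p) (1 - g 0 p - g 1 p - g 2 p)))
    (((hg 0).inf (hg 1)).inf
      ((hg 2).inf (((continuousOn_const.sub (hg 0)).sub (hg 1)).sub (hg 2))))
    (fun p hp => lt_min (lt_min (hpos 0 p hp) (hpos 1 p hp))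
      (lt_min (hpos 2 p hp) (by linarith [hsum p hp])))
  exact ⟨m, hm, fun N hN i x => le_rate4_of_le_min (hle _ (pt_mem_box hN x)) i⟩

lemma exists_abs_profile_sub_le_of_step (hg : ∀ i, ContDiffOn ℝ 1 (g i) (box d))
    (hper : ∀ i, TransPeriodic (g i)) :
    ∃ L : NNReal, ∀ N, 0 < N → ∀ (k : Fin d) (x y : Site d N), step k x = some y →
      ∀ i, |g i (pt x) - g i (pt y)| ≤ L / N := by
  choose K hK using fun i => (hg i).exists_lipschitzOnWith one_ne_zero convex_box isCompact_box
  refine ⟨∑ i, K i, fun N hN k x y hst i => ?_⟩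
  obtain ⟨q, hq, hdist, hrep⟩ := exists_near_rep_of_step hN hst
  rw [← hrep _ (hper i), ← Real.dist_eq]
  calc dist (g i (pt x)) (g i q) ≤ K i * dist (pt x) q :=
        (hK i).dist_le_mul _ (pt_mem_box hN x) _ hq
    _ ≤ (∑ j, K j : NNReal) * (1 / N) := by
        gcongr
        exact_mod_cast Finset.single_le_sum (fun j _ => (K j).2) (Finset.mem_univ i)
    _ = _ := by ring

end Profile

section Exchange

variable {a1 a2 a3 : Site d N → ℝ}

lemma sum_exchGen_mul (D : ℝ) (h u w : Config d N → ℝ) :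
    ∑ η, exchGen D h η * u η * w η
      = D * ∑ k : Fin d, ∑ x : Site d N, (step k x).elim 0 fun y =>
          ∑ η, (h (swap x y η) - h η) * u η * w η := by
  have elim_sum : ∀ k x, ((step k x).elim 0 fun y => ∑ η, (h (swap x y η) - h η) * u η * w η)
      = ∑ η, ((step k x).elim 0 fun y => h (swap x y η) - h η) * u η * w η := by
    intro k x; cases step k x <;> simp
  simp only [elim_sum, exchGen, Finset.mul_sum, Finset.sum_mul]
  rw [Finset.sum_comm]
  refine Finset.sum_congr rfl fun k _ => ?_
  rw [Finset.sum_comm]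
  simp only [mul_assoc]

lemma exchange_bound_of_abs_nu_swap_sub_le {D c : ℝ} (hD : 0 ≤ D) (hc : 0 ≤ c)
    (hν : ∀ η, 0 ≤ nu a1 a2 a3 η)
    (hratio : ∀ (k : Fin d) (x y : Site d N), step k x = some y → ∀ η,
      |nu a1 a2 a3 (swap x y η) - nu a1 a2 a3 η| ≤ c * nu a1 a2 a3 η)
    {f : Config d N → ℝ} (hf : ∀ η, 0 ≤ f η) (hf1 : ∑ η, f η * nu a1 a2 a3 η = 1) :
    ∑ η, exchGen D (fun σ => √(f σ)) η * √(f η) * nu a1 a2 a3 η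
      ≤ -(1 / 4) * exchDirForm D a1 a2 a3 f
        + D * (d * Fintype.card (Site d N) * (c ^ 2 * (2 + c) / 8)) := by
  have hedge : ∀ k x,
      ((step k x).elim 0 fun y =>
        ∑ η, (√(f (swap x y η)) - √(f η)) * √(f η) * nu a1 a2 a3 η)
      ≤ -(1 / 4) * ((step k x).elim 0 fun y =>
        ∑ η, (√(f (swap x y η)) - √(f η)) ^ 2 * nu a1 a2 a3 η) + c ^ 2 * (2 + c) / 8 := by
    intro k x
    cases hst : step k x with
    | none => simpa using (by positivity : 0 ≤ c ^ 2 * (2 + c) / 8)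
    | some y =>
      exact sum_sqrt_comp_sub_mul_le (swap_involutive x y) hν (hratio k x y hst) hf hf1
  rw [sum_exchGen_mul, exchDirForm]
  calc _ ≤ D * ∑ k : Fin d, ∑ x : Site d N, (-(1 / 4) * ((step k x).elim 0 fun y =>
        ∑ η, (√(f (swap x y η)) - √(f η)) ^ 2 * nu a1 a2 a3 η) + c ^ 2 * (2 + c) / 8) := by
        gcongr with k _ x _
        exact hedge k x
    _ = _ := by
        simp only [Finset.sum_add_distrib, ← Finset.mul_sum, Finset.sum_const, Finset.card_univ,
          Fintype.card_fin, nsmul_eq_mul]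
        ring

end Exchange

lemma cast_mul_card_site_le (hN : 1 ≤ N) :
    (d : ℝ) * Fintype.card (Site d N) ≤ 3 * d * (N : ℝ) ^ d := by
  rcases Nat.eq_zero_or_pos d with rfl | hd
  · simp
  have hN' : (1 : ℝ) ≤ N := by exact_mod_cast hN
  have hpow : (N : ℝ) ^ d = N * N ^ (d - 1) := by rw [← pow_succ', Nat.sub_add_cancel hd]
  simp only [Fintype.card_prod, Fintype.card_fun, Fintype.card_fin]
  push_cast
  calc (d : ℝ) * ((2 * N + 1) * N ^ (d - 1)) ≤ d * (3 * N * N ^ (d - 1)) := by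
        gcongr; linarith
    _ = 3 * d * N ^ d := by rw [hpow]; ring

lemma cast_mul_card_site_mul_error_le (hN : 1 ≤ N) {C : ℝ} (hC : 0 ≤ C) :
    (d : ℝ) * Fintype.card (Site d N) * ((C / N) ^ 2 * (2 + C / N) / 8)
      ≤ 3 * d * (C ^ 2 * (2 + C) / 8) * (N : ℝ) ^ ((d : ℤ) - 2) := by
  have hN' : (1 : ℝ) ≤ N := by exact_mod_cast hN
  have hzpow : (N : ℝ) ^ ((d : ℤ) - 2) = N ^ d / N ^ 2 := by
    rw [zpow_sub₀ (by positivity), zpow_natCast, zpow_two, sq]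
  have hCN : C / N ≤ C := div_le_self hC hN'
  calc _ ≤ 3 * d * (N : ℝ) ^ d * ((C / N) ^ 2 * (2 + C) / 8) :=
        mul_le_mul (cast_mul_card_site_le hN) (by gcongr) (by positivity) (by positivity)
    _ = _ := by rw [hzpow]; field_simp

theorem exchange_dirichlet_bound_general (d : ℕ) (D : ℝ) (hD : 0 < D)
    (cs Cs : ℝ) (hcs : 0 < cs)
    (V : Set (ℝ × (Fin (d - 1) → ℝ)))
    (hVslab : {p : ℝ × (Fin (d - 1) → ℝ) | p.1 ∈ Set.Icc (-1 : ℝ) 1} ⊆ V)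
    (g : Fin 3 → (ℝ × (Fin (d - 1) → ℝ)) → ℝ)
    (hg : ∀ i, ContDiffOn ℝ 2 (g i) V)
    (hgper : ∀ (i : Fin 3) (p : ℝ × (Fin (d - 1) → ℝ)) (j : Fin (d - 1)),
      g i (p.1, Function.update p.2 j (p.2 j + 1)) = g i p)
    (hgbd : ∀ i : Fin 3, ∀ p ∈ V, cs ≤ g i p ∧ g i p ≤ Cs)
    (hgsum : ∀ p ∈ V, g 0 p + g 1 p + g 2 p < 1) :
    ∃ C1 : ℝ, 0 < C1 ∧ ∀ N : ℕ, 1 ≤ N → ∀ f : Config d N → ℝ,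
      (∀ η, 0 ≤ f η) →
      (∑ η : Config d N,
        f η * nu (fun x => g 0 (pt x)) (fun x => g 1 (pt x)) (fun x => g 2 (pt x)) η = 1) →
      ∑ η : Config d N, exchGen D (fun σ => Real.sqrt (f σ)) η * Real.sqrt (f η)
          * nu (fun x => g 0 (pt x)) (fun x => g 1 (pt x)) (fun x => g 2 (pt x)) η
        ≤ -(1 / 4) * exchDirForm D (fun x => g 0 (pt x)) (fun x => g 1 (pt x))
              (fun x => g 2 (pt x)) f
          + C1 * (N : ℝ) ^ ((d : ℤ) - 2) := by
  have hbox : box d ⊆ V := fun p hp => hVslab hp.1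
  have hg1 : ∀ i, ContDiffOn ℝ 1 (g i) (box d) := fun i =>
    ((hg i).mono hbox).of_le (by norm_num)
  obtain ⟨m, hm, hlow⟩ := exists_le_rate4_of_profile (fun i => (hg1 i).continuousOn)
    (fun i p hp => hcs.trans_le (hgbd i p (hbox hp)).1) (fun p hp => hgsum p (hbox hp))
  obtain ⟨L, hL⟩ := exists_abs_profile_sub_le_of_step hg1 hgper
  set C : ℝ := 6 * L / m ^ 2
  refine ⟨D * (3 * d * (C ^ 2 * (2 + C) / 8)) + 1, by positivity, fun N hN f hf hf1 => ?_⟩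
  have hratio : ∀ (k : Fin d) (x y : Site d N), step k x = some y → ∀ η,
      |nu _ _ _ (swap x y η) - nu _ _ _ η| ≤ C / N * nu _ _ _ η := fun k x y hst η => by
    convert abs_nu_swap_sub_le hm (hlow N hN) (hL N hN k x y hst 0) (hL N hN k x y hst 1)
      (hL N hN k x y hst 2) η using 2
    ring
  have herr := mul_le_mul_of_nonneg_left
    (cast_mul_card_site_mul_error_le (d := d) hN (by positivity : 0 ≤ C)) hD.le
  have hNpow : (0 : ℝ) ≤ (N : ℝ) ^ ((d : ℤ) - 2) := by positivity
  calc _ ≤ _ := exchange_bound_of_abs_nu_swap_sub_le hD.le (by positivity)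
        (fun η => (nu_pos hm (hlow N hN) η).le) hratio hf hf1
    _ ≤ _ := by linarith

/-- Bound on the exchange Dirichlet form term: for a smooth
profile `α̂_N(x) = ĝ(x/N)` there is a constant `C₁ > 0` (depending only on `d`,
`D` and `ĝ`) such that `⟨𝓛_N √f, √f⟩_{ν} ≤ −(1/4)𝒟_N(f,ν) + C₁ N^{d−2}` for
every `N ≥ 1` and every density `f` with respect to `ν = ν^N_{α̂_N}`. -/
theorem exchange_dirichlet_bound (d : ℕ) (hd : 1 ≤ d) (D : ℝ) (hD : 0 < D)
    (cs Cs : ℝ) (hcs : 0 < cs) (hcsCs : cs < Cs) (hCs : Cs < 1)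
    (V : Set (ℝ × (Fin (d - 1) → ℝ))) (hV : IsOpen V)
    (hVslab : {p : ℝ × (Fin (d - 1) → ℝ) | p.1 ∈ Set.Icc (-1 : ℝ) 1} ⊆ V)
    (hVper : ∀ p ∈ V, ∀ j : Fin (d - 1), (p.1, Function.update p.2 j (p.2 j + 1)) ∈ V)
    (g : Fin 3 → (ℝ × (Fin (d - 1) → ℝ)) → ℝ)
    (hg : ∀ i, ContDiffOn ℝ 2 (g i) V)
    (hgper : ∀ (i : Fin 3) (p : ℝ × (Fin (d - 1) → ℝ)) (j : Fin (d - 1)),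
      g i (p.1, Function.update p.2 j (p.2 j + 1)) = g i p)
    (hgbd : ∀ i : Fin 3, ∀ p ∈ V, cs ≤ g i p ∧ g i p ≤ Cs)
    (hgsum : ∀ p ∈ V, g 0 p + g 1 p + g 2 p < 1) :
    ∃ C1 : ℝ, 0 < C1 ∧ ∀ N : ℕ, 1 ≤ N → ∀ f : Config d N → ℝ,
      (∀ η, 0 ≤ f η) →
      (∑ η : Config d N,
        f η * nu (fun x => g 0 (pt x)) (fun x => g 1 (pt x)) (fun x => g 2 (pt x)) η = 1) →
      ∑ η : Config d N, exchGen D (fun σ => Real.sqrt (f σ)) η * Real.sqrt (f η)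
          * nu (fun x => g 0 (pt x)) (fun x => g 1 (pt x)) (fun x => g 2 (pt x)) η
        ≤ -(1 / 4) * exchDirForm D (fun x => g 0 (pt x)) (fun x => g 1 (pt x))
              (fun x => g 2 (pt x)) f
          + C1 * (N : ℝ) ^ ((d : ℤ) - 2) :=
  exchange_dirichlet_bound_general d D hD cs Cs hcs V hVslab g hg hgper hgbd hgsum

end SIT
end
end

section
/- Assume λ₁ ≥ λ₂ > 0, r > 0 and d ≥ 1. There exists a constant C > 0, depending only on λ₁, λ₂, r and d, such that: for all triples (ρ₁ᵃ,ρ₂ᵃ,ρ₃ᵃ) and (ρ₁ᵇ,ρ₂ᵇ,ρ₃ᵇ) with each coordinate in [0,1] and ρ₁+ρ₂+ρ₃ ≤ 1, setting Tᵃ = ρ₁ᵃ+ρ₃ᵃ, Rᵃ = 1−ρ₂ᵃ−ρ₃ᵃ and likewise Tᵇ, Rᵇ, one has (F₁(ρ₁ᵃ,Tᵃ,Rᵃ) − F₁(ρ₁ᵇ,Tᵇ,Rᵇ))·(ρ₁ᵃ−ρ₁ᵇ)₊ + (H(ρ₁ᵃ,Tᵃ,Rᵃ) − H(ρ₁ᵇ,Tᵇ,Rᵇ))·(Tᵃ−Tᵇ)₊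 + (J(Rᵃ) − J(Rᵇ))·(Rᵃ−Rᵇ)₊ ≤ C·[ (ρ₁ᵃ−ρ₁ᵇ)₊² + (Tᵃ−Tᵇ)₊² + (Rᵃ−Rᵇ)₊² ]. -/
/-!
Write `B = (λ₁ − λ₂)ρ₁ + λ₂T` for the rate shared by `F₁` and `H`. On the region reached from the
simplex, `B ∈ [0, λ₁]` and the weights `R − ρ₁ = 1 − ρ₁ − ρ₂ − ρ₃` and `1 − T` lie in `[0, 1]`.
Hence each reaction term is quasi-monotone: when its own coordinate increases, its increment is
at most `(2dλ₁ + 1)(x + y + z)`, where `x, y, z` are the positive parts of the increments of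
`ρ₁, T, R`; the remaining contributions, `−(r + 2)ρ₁` in `F₁`, `−2dB·T − T` in `H` and
`−(r + 1)R` in `J`, can only decrease. Multiplying by the positive parts and using
`(x + y + z)² ≤ 3(x² + y² + z²)` gives `C = 3(2dλ₁ + 1)`.
-/

noncomputable section

/-- `F₁(ρ₁,T,R) = 2d[(λ₁−λ₂)ρ₁ + λ₂T](R−ρ₁) + T − (r+2)ρ₁`, the first reaction
term in the coordinates `(ρ₁, T, R) = (ρ₁, ρ₁+ρ₃, 1−ρ₂−ρ₃)`. -/
def F1c (d : ℕ) (lam1 lam2 r ρ1 T R : ℝ) : ℝ :=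
  2 * d * ((lam1 - lam2) * ρ1 + lam2 * T) * (R - ρ1) + T - (r + 2) * ρ1

/-- `H(ρ₁,T,R) = 2d[(λ₁−λ₂)ρ₁ + λ₂T](1−T) − T`. -/
def Hc (d : ℕ) (lam1 lam2 ρ1 T R : ℝ) : ℝ :=
  2 * d * ((lam1 - lam2) * ρ1 + lam2 * T) * (1 - T) - T

/-- `J(R) = −(r+1)R + 1`. -/
def Jc (r R : ℝ) : ℝ := -(r + 1) * R + 1

open Set

def reactionRate (lam1 lam2 ρ1 T : ℝ) : ℝ := (lam1 - lam2) * ρ1 + lam2 * T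

theorem F1c_eq_reactionRate (d : ℕ) (lam1 lam2 r ρ1 T R : ℝ) :
    F1c d lam1 lam2 r ρ1 T R = 2 * d * reactionRate lam1 lam2 ρ1 T * (R - ρ1) + T - (r + 2) * ρ1 :=
  rfl

theorem Hc_eq_reactionRate (d : ℕ) (lam1 lam2 ρ1 T R : ℝ) :
    Hc d lam1 lam2 ρ1 T R = 2 * d * reactionRate lam1 lam2 ρ1 T * (1 - T) - T :=
  rfl

structure Admissible (ρ1 T R : ℝ) : Prop where
  ρ1_mem : ρ1 ∈ Icc (0 : ℝ) 1
  T_mem : T ∈ Icc (0 : ℝ) 1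
  sub_mem : R - ρ1 ∈ Icc (0 : ℝ) 1

theorem admissible_of_simplex {ρ1 ρ2 ρ3 : ℝ} (h1 : 0 ≤ ρ1) (h2 : 0 ≤ ρ2) (h3 : 0 ≤ ρ3)
    (hsum : ρ1 + ρ2 + ρ3 ≤ 1) : Admissible ρ1 (ρ1 + ρ3) (1 - ρ2 - ρ3) :=
  ⟨⟨h1, by linarith⟩, ⟨by linarith, by linarith⟩, ⟨by linarith, by linarith⟩⟩

theorem mul_le_of_le_of_mem_Icc {a P s : ℝ} (ha : a ≤ P) (hP : 0 ≤ P) (hs : s ∈ Icc (0 : ℝ) 1) :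
    a * s ≤ P :=
  (mul_le_mul_of_nonneg_right ha hs.1).trans (mul_le_of_le_one_right hP hs.2)

theorem mul_max_zero_le_mul_max_zero {a b u : ℝ} (h : 0 < u → a ≤ b) :
    a * max u 0 ≤ b * max u 0 := by
  rcases le_or_gt u 0 with hu | hu
  · simp [max_eq_right hu]
  · rw [max_eq_left hu.le]
    exact mul_le_mul_of_nonneg_right (h hu) hu.le

theorem add_add_sq_le_three_mul (x y z : ℝ) : (x + y + z) ^ 2 ≤ 3 * (x ^ 2 + y ^ 2 + z ^ 2) := by
  nlinarith [sq_nonneg (x - y), sq_nonneg (y - z), sq_nonneg (x - z)]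

theorem Jc_antitone {r : ℝ} (hr : 0 ≤ r + 1) : Antitone (Jc r) := fun R R' h => by
  unfold Jc
  nlinarith

section

variable {lam1 lam2 : ℝ}

theorem reactionRate_mem_Icc (hlam : lam2 ≤ lam1) (hlam2 : 0 ≤ lam2) {ρ1 T : ℝ}
    (hρ1 : ρ1 ∈ Icc (0 : ℝ) 1) (hT : T ∈ Icc (0 : ℝ) 1) :
    reactionRate lam1 lam2 ρ1 T ∈ Icc 0 lam1 := by
  obtain ⟨hρ1₀, hρ1₁⟩ := hρ1
  obtain ⟨hT₀, hT₁⟩ := hT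
  have hlam' : 0 ≤ lam1 - lam2 := sub_nonneg.2 hlam
  unfold reactionRate
  constructor <;> nlinarith [mul_nonneg hlam' hρ1₀, mul_nonneg hlam2 hT₀,
    mul_nonneg hlam' (sub_nonneg.2 hρ1₁), mul_nonneg hlam2 (sub_nonneg.2 hT₁)]

theorem reactionRate_sub_le (hlam : lam2 ≤ lam1) (hlam2 : 0 ≤ lam2) (ρ1a Ta ρ1b Tb : ℝ) :
    reactionRate lam1 lam2 ρ1a Ta - reactionRate lam1 lam2 ρ1b Tb
      ≤ lam1 * (max (ρ1a - ρ1b) 0 + max (Ta - Tb) 0) := by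
  have hlam' : 0 ≤ lam1 - lam2 := sub_nonneg.2 hlam
  have hx := mul_le_mul_of_nonneg_left (le_max_left (ρ1a - ρ1b) 0) hlam'
  have hy := mul_le_mul_of_nonneg_left (le_max_left (Ta - Tb) 0) hlam2
  have hx' := mul_nonneg hlam2 (le_max_right (ρ1a - ρ1b) 0)
  have hy' := mul_nonneg hlam' (le_max_right (Ta - Tb) 0)
  unfold reactionRate
  linarith

theorem F1c_sub_le (d : ℕ) {r : ℝ} (hlam : lam2 ≤ lam1) (hlam2 : 0 ≤ lam2) (hr : 0 ≤ r + 2)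
    {ρ1a Ta Ra ρ1b Tb Rb : ℝ} (ha : Admissible ρ1a Ta Ra) (hb : Admissible ρ1b Tb Rb)
    (hρ1 : ρ1b < ρ1a) :
    F1c d lam1 lam2 r ρ1a Ta Ra - F1c d lam1 lam2 r ρ1b Tb Rb
      ≤ (2 * d * lam1 + 1) * (max (ρ1a - ρ1b) 0 + max (Ta - Tb) 0 + max (Ra - Rb) 0) := by
  set Ba := reactionRate lam1 lam2 ρ1a Ta
  set Bb := reactionRate lam1 lam2 ρ1b Tb
  obtain ⟨hBb₀, hBb₁⟩ := reactionRate_mem_Icc hlam hlam2 hb.ρ1_mem hb.T_mem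
  have hlam1 : 0 ≤ lam1 := hlam2.trans hlam
  have hz₀ := le_max_right (Ra - Rb) 0
  have hrate : (Ba - Bb) * (Ra - ρ1a) ≤ lam1 * (max (ρ1a - ρ1b) 0 + max (Ta - Tb) 0) :=
    mul_le_of_le_of_mem_Icc (reactionRate_sub_le hlam hlam2 ρ1a Ta ρ1b Tb)
      (by positivity) ha.sub_mem
  have hgap : Bb * ((Ra - ρ1a) - (Rb - ρ1b)) ≤ lam1 * max (Ra - Rb) 0 :=
    calc Bb * ((Ra - ρ1a) - (Rb - ρ1b)) ≤ Bb * max (Ra - Rb) 0 := by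
          gcongr
          linarith [le_max_left (Ra - Rb) 0]
      _ ≤ lam1 * max (Ra - Rb) 0 := by gcongr
  have hT := le_max_left (Ta - Tb) 0
  have hdecay : 0 ≤ (r + 2) * (ρ1a - ρ1b) := mul_nonneg hr (sub_nonneg.2 hρ1.le)
  have hd : (0 : ℝ) ≤ d := d.cast_nonneg
  rw [F1c_eq_reactionRate, F1c_eq_reactionRate]
  linarith [mul_le_mul_of_nonneg_left hrate hd, mul_le_mul_of_nonneg_left hgap hd,
    le_max_right (ρ1a - ρ1b) 0]

theorem Hc_sub_le (d : ℕ) (hlam : lam2 ≤ lam1) (hlam2 : 0 ≤ lam2)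
    {ρ1a Ta Ra ρ1b Tb Rb : ℝ} (ha : Admissible ρ1a Ta Ra) (hb : Admissible ρ1b Tb Rb)
    (hT : Tb < Ta) :
    Hc d lam1 lam2 ρ1a Ta Ra - Hc d lam1 lam2 ρ1b Tb Rb
      ≤ 2 * d * lam1 * (max (ρ1a - ρ1b) 0 + max (Ta - Tb) 0) := by
  set Ba := reactionRate lam1 lam2 ρ1a Ta
  set Bb := reactionRate lam1 lam2 ρ1b Tb
  have hBb₀ := (reactionRate_mem_Icc hlam hlam2 hb.ρ1_mem hb.T_mem).1
  have hlam1 : 0 ≤ lam1 := hlam2.trans hlam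
  have hrate : (Ba - Bb) * (1 - Ta) ≤ lam1 * (max (ρ1a - ρ1b) 0 + max (Ta - Tb) 0) :=
    mul_le_of_le_of_mem_Icc (reactionRate_sub_le hlam hlam2 ρ1a Ta ρ1b Tb)
      (by positivity) ⟨by linarith [ha.T_mem.2], by linarith [ha.T_mem.1]⟩
  have hd : (0 : ℝ) ≤ d := d.cast_nonneg
  rw [Hc_eq_reactionRate, Hc_eq_reactionRate]
  linarith [mul_le_mul_of_nonneg_left hrate hd, mul_nonneg hd (mul_nonneg hBb₀ (sub_nonneg.2 hT.le))]

end

theorem reaction_onesided_estimate (d : ℕ) {lam1 lam2 r : ℝ} (hlam : lam2 ≤ lam1)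
    (hlam2 : 0 ≤ lam2) (hr : 0 ≤ r + 1)
    {ρ1a Ta Ra ρ1b Tb Rb : ℝ} (ha : Admissible ρ1a Ta Ra) (hb : Admissible ρ1b Tb Rb) :
    (F1c d lam1 lam2 r ρ1a Ta Ra - F1c d lam1 lam2 r ρ1b Tb Rb) * max (ρ1a - ρ1b) 0
        + (Hc d lam1 lam2 ρ1a Ta Ra - Hc d lam1 lam2 ρ1b Tb Rb) * max (Ta - Tb) 0
        + (Jc r Ra - Jc r Rb) * max (Ra - Rb) 0
      ≤ 3 * (2 * d * lam1 + 1)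
          * (max (ρ1a - ρ1b) 0 ^ 2 + max (Ta - Tb) 0 ^ 2 + max (Ra - Rb) 0 ^ 2) := by
  set x := max (ρ1a - ρ1b) 0
  set y := max (Ta - Tb) 0
  set z := max (Ra - Rb) 0
  set K : ℝ := 2 * d * lam1 + 1
  have hlam1 : 0 ≤ lam1 := hlam2.trans hlam
  have hx : 0 ≤ x := le_max_right _ _
  have hy : 0 ≤ y := le_max_right _ _
  have hz : 0 ≤ z := le_max_right _ _
  have hK : 0 ≤ K := by positivity
  have hF : (F1c d lam1 lam2 r ρ1a Ta Ra - F1c d lam1 lam2 r ρ1b Tb Rb) * x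
      ≤ K * (x + y + z) * x := mul_max_zero_le_mul_max_zero fun h =>
    F1c_sub_le d hlam hlam2 (by linarith) ha hb (sub_pos.1 h)
  have hH : (Hc d lam1 lam2 ρ1a Ta Ra - Hc d lam1 lam2 ρ1b Tb Rb) * y
      ≤ K * (x + y + z) * y := mul_max_zero_le_mul_max_zero fun h =>
    (Hc_sub_le d hlam hlam2 ha hb (sub_pos.1 h)).trans (by nlinarith)
  have hJ : (Jc r Ra - Jc r Rb) * z ≤ K * (x + y + z) * z := mul_max_zero_le_mul_max_zero fun h =>
    (sub_nonpos.2 (Jc_antitone hr (sub_pos.1 h).le)).trans (by positivity)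
  calc _ ≤ K * (x + y + z) * x + K * (x + y + z) * y + K * (x + y + z) * z :=
        add_le_add (add_le_add hF hH) hJ
    _ = K * (x + y + z) ^ 2 := by ring
    _ ≤ K * (3 * (x ^ 2 + y ^ 2 + z ^ 2)) := by gcongr; exact add_add_sq_le_three_mul x y z
    _ = 3 * K * (x ^ 2 + y ^ 2 + z ^ 2) := by ring

theorem comparison_onesided_estimate_general (d : ℕ) (lam1 lam2 r : ℝ)
    (hlam : lam2 ≤ lam1) (hlam2 : 0 < lam2) (hr : 0 < r) :
    ∃ C : ℝ, 0 < C ∧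
      ∀ ρ1a ρ2a ρ3a ρ1b ρ2b ρ3b : ℝ,
        ρ1a ∈ Set.Icc (0 : ℝ) 1 → ρ2a ∈ Set.Icc (0 : ℝ) 1 → ρ3a ∈ Set.Icc (0 : ℝ) 1 →
        ρ1b ∈ Set.Icc (0 : ℝ) 1 → ρ2b ∈ Set.Icc (0 : ℝ) 1 → ρ3b ∈ Set.Icc (0 : ℝ) 1 →
        ρ1a + ρ2a + ρ3a ≤ 1 → ρ1b + ρ2b + ρ3b ≤ 1 →
        (F1c d lam1 lam2 r ρ1a (ρ1a + ρ3a) (1 - ρ2a - ρ3a)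
              - F1c d lam1 lam2 r ρ1b (ρ1b + ρ3b) (1 - ρ2b - ρ3b))
            * max (ρ1a - ρ1b) 0
          + (Hc d lam1 lam2 ρ1a (ρ1a + ρ3a) (1 - ρ2a - ρ3a)
              - Hc d lam1 lam2 ρ1b (ρ1b + ρ3b) (1 - ρ2b - ρ3b))
            * max ((ρ1a + ρ3a) - (ρ1b + ρ3b)) 0
          + (Jc r (1 - ρ2a - ρ3a) - Jc r (1 - ρ2b - ρ3b))
            * max ((1 - ρ2a - ρ3a) - (1 - ρ2b - ρ3b)) 0
        ≤ C * ((max (ρ1a - ρ1b) 0) ^ 2 + (max ((ρ1a + ρ3a) - (ρ1b + ρ3b)) 0) ^ 2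
            + (max ((1 - ρ2a - ρ3a) - (1 - ρ2b - ρ3b)) 0) ^ 2) := by
  have hlam1 : 0 < lam1 := hlam2.trans_le hlam
  refine ⟨3 * (2 * d * lam1 + 1), by positivity, ?_⟩
  intro ρ1a ρ2a ρ3a ρ1b ρ2b ρ3b h1a h2a h3a h1b h2b h3b hsa hsb
  exact reaction_onesided_estimate d hlam hlam2.le (by linarith)
    (admissible_of_simplex h1a.1 h2a.1 h3a.1 hsa) (admissible_of_simplex h1b.1 h2b.1 h3b.1 hsb)

/-- One-sided Lipschitz estimate with positive parts for the
reaction terms in the coordinates `(ρ₁, T, R)`, used in the comparison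
principle. -/
theorem comparison_onesided_estimate (d : ℕ) (hd : 1 ≤ d) (lam1 lam2 r : ℝ)
    (hlam : lam2 ≤ lam1) (hlam2 : 0 < lam2) (hr : 0 < r) :
    ∃ C : ℝ, 0 < C ∧
      ∀ ρ1a ρ2a ρ3a ρ1b ρ2b ρ3b : ℝ,
        ρ1a ∈ Set.Icc (0 : ℝ) 1 → ρ2a ∈ Set.Icc (0 : ℝ) 1 → ρ3a ∈ Set.Icc (0 : ℝ) 1 →
        ρ1b ∈ Set.Icc (0 : ℝ) 1 → ρ2b ∈ Set.Icc (0 : ℝ) 1 → ρ3b ∈ Set.Icc (0 : ℝ) 1 →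
        ρ1a + ρ2a + ρ3a ≤ 1 → ρ1b + ρ2b + ρ3b ≤ 1 →
        (F1c d lam1 lam2 r ρ1a (ρ1a + ρ3a) (1 - ρ2a - ρ3a)
              - F1c d lam1 lam2 r ρ1b (ρ1b + ρ3b) (1 - ρ2b - ρ3b))
            * max (ρ1a - ρ1b) 0
          + (Hc d lam1 lam2 ρ1a (ρ1a + ρ3a) (1 - ρ2a - ρ3a)
              - Hc d lam1 lam2 ρ1b (ρ1b + ρ3b) (1 - ρ2b - ρ3b))
            * max ((ρ1a + ρ3a) - (ρ1b + ρ3b)) 0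
          + (Jc r (1 - ρ2a - ρ3a) - Jc r (1 - ρ2b - ρ3b))
            * max ((1 - ρ2a - ρ3a) - (1 - ρ2b - ρ3b)) 0
        ≤ C * ((max (ρ1a - ρ1b) 0) ^ 2 + (max ((ρ1a + ρ3a) - (ρ1b + ρ3b)) 0) ^ 2
            + (max ((1 - ρ2a - ρ3a) - (1 - ρ2b - ρ3b)) 0) ^ 2) :=
  comparison_onesided_estimate_general d lam1 lam2 r hlam hlam2 hr

end
end
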